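/- Fix k = (k₀,k₁) ∈ ℂ², κ = (κ₀',κ₁') ∈ ℂ², and a holomorphic (complex-differentiable) function φ : ℂ² × ℂ² × ℂ → ℂ. Define Φ on ℂ^{2×2} × ℂ² × ℂ² (with arguments x = (x^{AA'}), π = (π⁰,π¹), σ = (σ₀,σ₁)) by Φ(x,π,σ) = exp( i Σ_{A,A'} k_A κ_{A'} x^{AA'} ) · φ( (i Σ_{A'} x^{0A'}σ_{A'}, i Σ_{A'} x^{1A'}σ_{A'}), σ, Σ_A k_A π^A ). Then Φ satisfies the higher spin equation M'Φ = 0, i.e. Σ_{A,B,A',B'∈{0,1}} ε^{A'B'} σ_{B'} ε^{AB} ∂²Φ/(∂π^B ∂x^{AA'}) = 0 identically. (Paper: the forward direction of Theorem 5.10, at the level of the integrand of formula (5.15): every Φ(X) = ∫ e^{ik_ax^a} φ(Z^α, k_Bπ^B) Ω solves M'Φ = 0.) -/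

import Mathlib

/-!
The forward direction of Theorem 5.10 at the level of the integrand of the
Fourier–twistor formula (5.15): for any holomorphic `φ` and fixed spinors
`k, κ`, the field
`Φ(x,π,σ) = e^{i Σ k_A κ_{A'} x^{AA'}} φ((i Σ x^{0A'}σ_{A'}, i Σ x^{1A'}σ_{A'}), σ, Σ k_A π^A)`
satisfies the higher spin equation `M'Φ = 0`.
-/

/-- Fields on complexified space-time with two spinor arguments. -/
abbrev TwField : Type :=
  (Fin 2 → Fin 2 → ℂ) → (Fin 2 → ℂ) → (Fin 2 → ℂ) → ℂ

/-- Complex partial derivative with respect to `x^{AA'}`. -/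
noncomputable def dX (A A' : Fin 2) (Φ : TwField) : TwField :=
  fun x π σ =>
    deriv (fun s : ℂ => Φ (Function.update x A (Function.update (x A) A' s)) π σ) (x A A')

/-- Complex partial derivative with respect to `π^B`. -/
noncomputable def dPi (B : Fin 2) (Φ : TwField) : TwField :=
  fun x π σ => deriv (fun s : ℂ => Φ x (Function.update π B s) σ) (π B)

/-- The antisymmetric ε-symbol on `{0,1}`: `ε^{01} = 1 = −ε^{10}`. -/
def eps (A B : Fin 2) : ℂ :=
  if A = 0 ∧ B = 1 then 1 else if A = 1 ∧ B = 0 then -1 else 0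

/-- The field defined by the integrand of the Fourier–twistor representation:
`Φ(x,π,σ) = exp(i Σ_{A,A'} k_A κ_{A'} x^{AA'}) ·
φ((i Σ_{A'} x^{0A'}σ_{A'}, i Σ_{A'} x^{1A'}σ_{A'}), σ, Σ_A k_A π^A)`. -/
noncomputable def Phi (k κ : Fin 2 → ℂ)
    (φ : (Fin 2 → ℂ) × (Fin 2 → ℂ) × ℂ → ℂ) : TwField :=
  fun x π σ =>
    Complex.exp (Complex.I * ∑ A : Fin 2, ∑ A' : Fin 2, k A * κ A' * x A A') *
      φ ((fun A : Fin 2 => Complex.I * ∑ A' : Fin 2, x A A' * σ A'), σ,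
        ∑ A : Fin 2, k A * π A)


/-!
Along a coordinate line in `x^{AA'}`, `Φ` is `exp` of an affine function times `φ` of an affine
function, so `∂Φ/∂x^{AA'} = e^{i k·x·κ} (i k_A κ_{A'} φ + i σ_{A'} ∂φ/∂Z^A)`; and `π` enters only
through `k_B π^B`, so `∂/∂π^B` contributes a factor `k_B`. Hence
`∂²Φ/∂π^B ∂x^{AA'} = k_A k_B κ_{A'} C + k_B σ_{A'} D_A`, and contracting with
`ε^{AB}` and `ε^{A'B'} σ_{B'}` kills both terms by antisymmetry. The analytic input is that
`∂φ/∂Z^A` is again holomorphic along complex lines.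
-/

open Complex Metric MeasureTheory Set

theorem exists_bound_deriv_fst_slice {E : Type*} [NormedAddCommGroup E] [NormedSpace ℂ E]
    {h : ℂ × ℂ → E} (hh : Differentiable ℂ h) (t₀ : ℂ) :
    ∃ M, ∀ t ∈ ball t₀ 1, ∀ z ∈ sphere (0 : ℂ) 1, ‖deriv (fun t => h (t, z)) t‖ ≤ M := by
  obtain ⟨M, hM⟩ : ∃ M, ∀ p ∈ closedBall t₀ 2 ×ˢ sphere (0 : ℂ) 1, ‖h p‖ ≤ M :=
    ((isCompact_closedBall t₀ 2).prod (isCompact_sphere 0 1)).exists_bound_of_continuousOn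
      hh.continuous.continuousOn
  refine ⟨M, fun t ht z hz => ?_⟩
  have hslice : Differentiable ℂ (fun t => h (t, z)) := hh.comp (by fun_prop)
  refine (norm_deriv_le_of_forall_mem_sphere_norm_le one_pos hslice.diffContOnCl
    fun s hs => hM (s, z) ⟨?_, hz⟩).trans_eq (div_one M)
  rw [mem_sphere] at hs
  rw [mem_ball] at ht
  rw [mem_closedBall]
  linarith [dist_triangle s t t₀]

/-- An Osgood-type lemma: Cauchy's formula writes the `r`-derivative as a circle integral, which
is then differentiated in `t` under the integral sign, dominated by the Cauchy estimate above. -/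
theorem differentiable_deriv_snd_slice {E : Type*} [NormedAddCommGroup E]
    [NormedSpace ℂ E] [CompleteSpace E] {h : ℂ × ℂ → E} (hh : Differentiable ℂ h) :
    Differentiable ℂ (fun t => deriv (fun r => h (t, r)) 0) := by
  intro t₀
  have hh_cont := hh.continuous
  set w : ℝ → ℂ := fun θ => deriv (circleMap 0 1) θ * ((circleMap 0 1 θ - 0) ^ 2)⁻¹
  have hw : ∀ θ, ‖w θ‖ = 1 := fun θ => by simp [w, deriv_circleMap]
  have hw_cont : Continuous w := by
    simp only [w, deriv_circleMap, sub_zero]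
    exact (by fun_prop : Continuous fun θ => circleMap 0 1 θ * I).mul
      (((continuous_circleMap 0 1).pow 2).inv₀ fun θ =>
        pow_ne_zero 2 (circleMap_ne_center one_ne_zero))
  have hcauchy : (fun t => deriv (fun r => h (t, r)) 0) = fun t =>
      (2 * Real.pi * I : ℂ)⁻¹ • ∫ θ in 0..2 * Real.pi, w θ • h (t, circleMap 0 1 θ) := by
    funext t
    have hslice : Differentiable ℂ (fun r => h (t, r)) := hh.comp (by fun_prop)
    rw [← cderiv_eq_deriv isOpen_univ hslice.differentiableOn one_pos (subset_univ _)]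
    simp only [cderiv, circleIntegral, w, smul_smul]
  obtain ⟨M, hM⟩ := exists_bound_deriv_fst_slice hh t₀
  rw [hcauchy]
  refine DifferentiableAt.const_smul ?_ _
  refine (intervalIntegral.hasDerivAt_integral_of_dominated_loc_of_deriv_le (bound := fun _ => M)
    (F' := fun t θ => w θ • deriv (fun t => h (t, circleMap 0 1 θ)) t)
    (ball_mem_nhds t₀ one_pos) ?_ ?_ ?_ ?_ intervalIntegrable_const ?_).2.differentiableAt
  · exact Filter.Eventually.of_forall fun t =>
      (hw_cont.smul (by fun_prop)).aestronglyMeasurable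
  · exact (hw_cont.smul (by fun_prop)).intervalIntegrable _ _
  · refine (hw_cont.aestronglyMeasurable).smul ?_
    exact ((stronglyMeasurable_deriv_with_param (f := fun θ t => h (t, circleMap 0 1 θ))
      (by fun_prop)).comp_measurable (measurable_id.prodMk measurable_const)).aestronglyMeasurable
  · refine Filter.Eventually.of_forall fun θ _ t ht => ?_
    rw [norm_smul, hw, one_mul]
    exact hM t ht _ (by simp)
  · exact Filter.Eventually.of_forall fun θ _ t _ =>
      ((hh.comp (by fun_prop) : Differentiable ℂ fun t => h (t, circleMap 0 1 θ)) t).hasDerivAt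
        |>.const_smul (w θ)

theorem differentiable_fderiv_apply_add_smul {V E : Type*}
    [NormedAddCommGroup V] [NormedSpace ℂ V] [NormedAddCommGroup E] [NormedSpace ℂ E]
    [CompleteSpace E] {f : V → E} (hf : Differentiable ℂ f) (p v w : V) :
    Differentiable ℂ (fun t : ℂ => fderiv ℂ f (p + t • v) w) := by
  have hline : (fun t : ℂ => fderiv ℂ f (p + t • v) w) =
      fun t => deriv (fun r : ℂ => f (p + t • v + r • w)) 0 := by
    funext t
    rw [← (hf _).lineDeriv_eq_fderiv, lineDeriv]
  rw [hline]
  exact differentiable_deriv_snd_slice (h := fun q : ℂ × ℂ => f (p + q.1 • v + q.2 • w))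
    (hf.comp (by fun_prop))

theorem hasDerivAt_comp_add_mul_smul {V E : Type*} [NormedAddCommGroup V] [NormedSpace ℂ V]
    [NormedAddCommGroup E] [NormedSpace ℂ E] {f : V → E} {p : V} (hf : DifferentiableAt ℂ f p)
    (a : ℂ) (v : V) :
    HasDerivAt (fun t : ℂ => f (p + (a * t) • v)) (a • fderiv ℂ f p v) 0 := by
  have hline : HasDerivAt (fun t : ℂ => p + (a * t) • v) (a • v) 0 := by
    simpa using (((hasDerivAt_id (0 : ℂ)).const_mul a).smul_const v).const_add p
  simpa [Function.comp_def] using hf.hasFDerivAt.comp_hasDerivAt_of_eq 0 hline (by simp)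

section TwistorField

variable (k κ : Fin 2 → ℂ)

noncomputable def phase (x : Fin 2 → Fin 2 → ℂ) : ℂ :=
  I * ∑ A : Fin 2, ∑ A' : Fin 2, k A * κ A' * x A A'

noncomputable def twistorArg (x : Fin 2 → Fin 2 → ℂ) (π σ : Fin 2 → ℂ) :
    (Fin 2 → ℂ) × (Fin 2 → ℂ) × ℂ :=
  ((fun A : Fin 2 => I * ∑ A' : Fin 2, x A A' * σ A'), σ, ∑ A : Fin 2, k A * π A)

theorem Phi_eq (φ : (Fin 2 → ℂ) × (Fin 2 → ℂ) × ℂ → ℂ) (x : Fin 2 → Fin 2 → ℂ)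
    (π σ : Fin 2 → ℂ) : Phi k κ φ x π σ = exp (phase k κ x) * φ (twistorArg k x π σ) := rfl

theorem phase_update (x : Fin 2 → Fin 2 → ℂ) (A A' : Fin 2) (s : ℂ) :
    phase k κ (Function.update x A (Function.update (x A) A' s)) =
      phase k κ x + I * k A * κ A' * (s - x A A') := by
  fin_cases A <;> fin_cases A' <;>
    simp [phase, Fin.sum_univ_two, Function.update_apply] <;> ring

theorem twistorArg_update_x (x : Fin 2 → Fin 2 → ℂ) (π σ : Fin 2 → ℂ) (A A' : Fin 2) (s : ℂ) :
    twistorArg k (Function.update x A (Function.update (x A) A' s)) π σ =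
      twistorArg k x π σ + (I * σ A' * (s - x A A')) • (Pi.single A 1, 0, 0) := by
  refine Prod.ext (funext fun B => ?_) (by simp [twistorArg])
  fin_cases A <;> fin_cases A' <;> fin_cases B <;>
    simp [twistorArg, Fin.sum_univ_two, Function.update_apply] <;> ring

theorem twistorArg_update_pi (x : Fin 2 → Fin 2 → ℂ) (π σ : Fin 2 → ℂ) (B : Fin 2) (s : ℂ) :
    twistorArg k x (Function.update π B s) σ =
      twistorArg k x π σ + (k B * (s - π B)) • (0, 0, 1) := by
  refine Prod.ext (by simp [twistorArg]) (Prod.ext (by simp [twistorArg]) ?_)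
  fin_cases B <;> simp [twistorArg, Fin.sum_univ_two, Function.update_apply] <;> ring

variable {φ : (Fin 2 → ℂ) × (Fin 2 → ℂ) × ℂ → ℂ}

theorem dX_Phi (hφ : Differentiable ℂ φ) (x : Fin 2 → Fin 2 → ℂ) (π σ : Fin 2 → ℂ) (A A' : Fin 2) :
    dX A A' (Phi k κ φ) x π σ = exp (phase k κ x) *
      (I * k A * κ A' * φ (twistorArg k x π σ) +
        I * σ A' * fderiv ℂ φ (twistorArg k x π σ) (Pi.single A 1, 0, 0)) := by
  set P := twistorArg k x π σ
  set g : ℂ → ℂ := fun t => exp (phase k κ x + I * k A * κ A' * t) *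
    φ (P + (I * σ A' * t) • (Pi.single A 1, 0, 0))
  have hline : (fun s => Phi k κ φ (Function.update x A (Function.update (x A) A' s)) π σ) =
      fun s => g (s - x A A') := by
    funext s
    simp only [Phi_eq, phase_update, twistorArg_update_x, g, P]
  have hexp : HasDerivAt (fun t => exp (phase k κ x + I * k A * κ A' * t))
      (exp (phase k κ x) * (I * k A * κ A')) 0 := by
    simpa using (((hasDerivAt_id (0 : ℂ)).const_mul (I * k A * κ A')).const_add _).cexp
  have hg : HasDerivAt g (exp (phase k κ x) * (I * k A * κ A' * φ P +
      I * σ A' * fderiv ℂ φ P (Pi.single A 1, 0, 0))) 0 := by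
    refine (hexp.mul (hasDerivAt_comp_add_mul_smul (hφ P) (I * σ A') _)).congr_deriv ?_
    simp only [mul_zero, add_zero, zero_smul, smul_eq_mul]
    ring
  rw [dX, hline, deriv_comp_sub_const, sub_self, hg.deriv]

theorem dPi_dX_Phi (hφ : Differentiable ℂ φ) (x : Fin 2 → Fin 2 → ℂ) (π σ : Fin 2 → ℂ)
    (A A' B : Fin 2) :
    dPi B (dX A A' (Phi k κ φ)) x π σ = exp (phase k κ x) * k B *
      (I * k A * κ A' * fderiv ℂ φ (twistorArg k x π σ) (0, 0, 1) +
        I * σ A' * deriv (fun t : ℂ => fderiv ℂ φ (twistorArg k x π σ + t • (0, 0, 1))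
          (Pi.single A 1, 0, 0)) 0) := by
  set P := twistorArg k x π σ
  set G : ℂ → ℂ := fun t => exp (phase k κ x) *
    (I * k A * κ A' * φ (P + t • (0, 0, 1)) +
      I * σ A' * fderiv ℂ φ (P + t • (0, 0, 1)) (Pi.single A 1, 0, 0))
  have hline : (fun s => dX A A' (Phi k κ φ) x (Function.update π B s) σ) =
      fun s => G (k B * (s - π B)) := by
    funext s
    simp only [dX_Phi k κ hφ, twistorArg_update_pi, G, P]
  have hφline : HasDerivAt (fun t : ℂ => φ (P + t • (0, 0, 1))) (fderiv ℂ φ P (0, 0, 1)) 0 :=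
    (hφ P).hasFDerivAt.hasLineDerivAt _
  have hG : HasDerivAt G (exp (phase k κ x) * (I * k A * κ A' * fderiv ℂ φ P (0, 0, 1) +
      I * σ A' * deriv (fun t : ℂ => fderiv ℂ φ (P + t • (0, 0, 1)) (Pi.single A 1, 0, 0)) 0)) 0 :=
    ((hφline.const_mul _).add
      ((differentiable_fderiv_apply_add_smul hφ _ _ _ 0).hasDerivAt.const_mul _)).const_mul _
  rw [dPi, hline, deriv_comp_sub_const (f := fun u => G (k B * u)), deriv_comp_mul_left,
    sub_self, mul_zero, hG.deriv, smul_eq_mul]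
  ring

end TwistorField

theorem Mprime_Phi_eq_zero (k κ : Fin 2 → ℂ)
    (φ : (Fin 2 → ℂ) × (Fin 2 → ℂ) × ℂ → ℂ) (hφ : Differentiable ℂ φ) :
    ∀ x π σ, ∑ A : Fin 2, ∑ B : Fin 2, ∑ A' : Fin 2, ∑ B' : Fin 2,
      eps A' B' * σ B' * eps A B * dPi B (dX A A' (Phi k κ φ)) x π σ = 0 := by
  intro x π σ
  -- The `k_A k_B` term dies against `ε^{AB}`, the `σ_{A'}` term against `ε^{A'B'} σ_{B'}`.
  simp only [dPi_dX_Phi k κ hφ, Fin.sum_univ_two, eps]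
  norm_num
  ring
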